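/- arXiv:math/0508005 — 3 statements merged into one kernel-verified Lean document; each statement's English description precedes it below -/
import Mathlib

section
/- In a right Bol magma L with neutral element 1, if an element b satisfies b^m = b^n for distinct positive integers m and n, and b has a right inverse (some a with a·b = 1), then b^k = 1 for some positive integer k. -/
/-!
In a right Bol magma with neutral element, `x * b ^ k` is `x` multiplied on the right by `b`
`k` times: the Bol identity `((x * b) * b ^ k) * b = x * ((b * b ^ k) * b)` drives an induction
in steps of two. For a right inverse `a` of `b` this gives `a * b ^ (k + 1) = b ^ k`, so left
multiplication by `a` cancels one factor from both sides of `b ^ (j + d) = b ^ j`; after `j`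
steps, `b ^ d = 1`.
-/

/-- Magma powers: `a^0 = 1`, `a^(n+1) = a^n * a`. -/
def mpow {L : Type*} [Mul L] [One L] (a : L) : ℕ → L
  | 0 => 1
  | n + 1 => mpow a n * a

section RightBol

variable {L : Type*} [Mul L] [One L]

theorem mpow_eq_iterate_mul_right (b : L) (k : ℕ) : mpow b k = (· * b)^[k] 1 := by
  induction k with
  | zero => rfl
  | succ k ih => rw [Function.iterate_succ_apply', ← ih]; rfl

theorem mul_mpow_eq_iterate_mul_right
    (hBol : ∀ x y z : L, ((x * y) * z) * y = x * ((y * z) * y))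
    (hone : ∀ x : L, 1 * x = x ∧ x * 1 = x) (b : L) (k : ℕ) (x : L) :
    x * mpow b k = (· * b)^[k] x := by
  induction k using Nat.twoStepInduction generalizing x with
  | zero => exact (hone x).2
  | one => exact congrArg (x * ·) (hone b).1
  | more k ih _ =>
    have left_mul_mpow : b * mpow b k = mpow b (k + 1) := by
      rw [ih, mpow_eq_iterate_mul_right, Function.iterate_succ_apply]
      exact congrArg _ (hone b).1.symm
    calc x * mpow b (k + 2)
        = x * ((b * mpow b k) * b) := by rw [left_mul_mpow]; rfl
      _ = ((x * b) * mpow b k) * b := (hBol _ _ _).symm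
      _ = (· * b)^[k + 2] x := by
          rw [ih, Function.iterate_succ_apply, Function.iterate_succ_apply']

theorem mul_mpow_succ_of_mul_eq_one
    (hBol : ∀ x y z : L, ((x * y) * z) * y = x * ((y * z) * y))
    (hone : ∀ x : L, 1 * x = x ∧ x * 1 = x) {a b : L} (hab : a * b = 1) (k : ℕ) :
    a * mpow b (k + 1) = mpow b k := by
  rw [mul_mpow_eq_iterate_mul_right hBol hone, Function.iterate_succ_apply, hab,
    mpow_eq_iterate_mul_right]

theorem mpow_eq_one_of_mpow_add_eq
    (hBol : ∀ x y z : L, ((x * y) * z) * y = x * ((y * z) * y))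
    (hone : ∀ x : L, 1 * x = x ∧ x * 1 = x) {a b : L} (hab : a * b = 1) {j d : ℕ}
    (h : mpow b (j + d) = mpow b j) : mpow b d = 1 := by
  induction j with
  | zero => simpa [mpow] using h
  | succ j ih =>
    apply ih
    rw [← mul_mpow_succ_of_mul_eq_one hBol hone hab (j + d),
      ← mul_mpow_succ_of_mul_eq_one hBol hone hab j, Nat.add_right_comm, h]

end RightBol

theorem bol_torsion_power_one_general {L : Type*} [Mul L] [One L]
    (hBol : ∀ x y z : L, ((x * y) * z) * y = x * ((y * z) * y))
    (hone : ∀ x : L, 1 * x = x ∧ x * 1 = x)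
    (b : L) (m n : ℕ) (hmn : m ≠ n)
    (hpow : mpow b m = mpow b n)
    (a : L) (hab : a * b = 1) :
    ∃ k : ℕ, 0 < k ∧ mpow b k = 1 := by
  rcases hmn.lt_or_gt with hlt | hlt
  · obtain ⟨d, rfl⟩ := Nat.exists_eq_add_of_lt hlt
    exact ⟨d + 1, d.succ_pos, mpow_eq_one_of_mpow_add_eq hBol hone hab hpow.symm⟩
  · obtain ⟨d, rfl⟩ := Nat.exists_eq_add_of_lt hlt
    exact ⟨d + 1, d.succ_pos, mpow_eq_one_of_mpow_add_eq hBol hone hab hpow⟩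

theorem bol_torsion_power_one {L : Type*} [Mul L] [One L]
    (hBol : ∀ x y z : L, ((x * y) * z) * y = x * ((y * z) * y))
    (hone : ∀ x : L, 1 * x = x ∧ x * 1 = x)
    (b : L) (m n : ℕ) (hm : 0 < m) (hn : 0 < n) (hmn : m ≠ n)
    (hpow : mpow b m = mpow b n)
    (a : L) (hab : a * b = 1) :
    ∃ k : ℕ, 0 < k ∧ mpow b k = 1 :=
  bol_torsion_power_one_general hBol hone b m n hmn hpow a hab
end

section
/- Let L be a finite right Bol magma with neutral element 1. Then the set J(L) of elements with a two-sided inverse is closed under multiplication, and (J(L),·) is a Bol loop. -/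
section Aux

variable {L : Type*} [Mul L] [One L]

/-- Right inverse property in a right Bol magma with identity. -/
lemma bol_rip (hBol : ∀ x y z : L, ((x * y) * z) * y = x * ((y * z) * y))
    (hone : ∀ x : L, 1 * x = x ∧ x * 1 = x)
    {c c' : L} (h1 : c * c' = 1) (h2 : c' * c = 1) :
    ∀ x : L, (x * c) * c' = x := by
  have h1l : ∀ x : L, 1 * x = x := fun x => (hone x).1
  have h1r : ∀ x : L, x * 1 = x := fun x => (hone x).2
  have hRalt : ∀ x y : L, (x * y) * y = x * (y * y) := by
    intro x y
    have := hBol x y 1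
    rwa [h1r, h1r] at this
  have L1 : c * (c' * c') = c' := by
    have := hBol c c' 1
    rw [h1, h1r, h1r, h1l] at this
    exact this.symm
  have stepa : ∀ y : L, ((y * c) * c') * c = y * c := by
    intro y
    have := hBol y c c'
    rwa [h1, h1l] at this
  have QP : ∀ y : L, (((y * c) * c') * c') * c = y := by
    intro y
    rw [hRalt (y * c) c', hBol y c (c' * c'), L1, h2, h1r]
  intro x
  have q1 := QP x
  have q2 := QP ((x * c) * c')
  rw [stepa x] at q2
  rw [← q2, q1]

lemma bol_linj (hBol : ∀ x y z : L, ((x * y) * z) * y = x * ((y * z) * y))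
    (hone : ∀ x : L, 1 * x = x ∧ x * 1 = x)
    {c c' : L} (h1 : c * c' = 1) (h2 : c' * c = 1) :
    Function.Injective (fun z : L => c * z) := by
  have h1l : ∀ x : L, 1 * x = x := fun x => (hone x).1
  have key : ∀ z : L, z * c = c' * ((c * z) * c) := by
    intro z
    have := hBol c' c z
    rwa [h2, h1l] at this
  intro z₁ z₂ h
  simp only at h
  have hc : z₁ * c = z₂ * c := by rw [key z₁, key z₂, h]
  have := congrArg (fun u => u * c') hc
  rwa [bol_rip hBol hone h1 h2, bol_rip hBol hone h1 h2] at this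

/-- In a finite right Bol magma with identity, any element whose left
translation is injective has a two-sided inverse. -/
lemma bol_linj_inv [Finite L]
    (hBol : ∀ x y z : L, ((x * y) * z) * y = x * ((y * z) * y))
    (hone : ∀ x : L, 1 * x = x ∧ x * 1 = x)
    {e : L} (hinj : Function.Injective (fun z : L => e * z)) :
    ∃ v : L, e * v = 1 ∧ v * e = 1 := by
  have h1l : ∀ x : L, 1 * x = x := fun x => (hone x).1
  have h1r : ∀ x : L, x * 1 = x := fun x => (hone x).2
  have hsurj : Function.Surjective (fun z : L => e * z) :=
    Finite.injective_iff_surjective.mp hinj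
  obtain ⟨v, hv⟩ := hsurj 1
  simp only at hv
  -- S = range of right translation by e
  set S : Set L := Set.range (fun x : L => x * e) with hSdef
  have hsub : (fun z : L => e * z) '' S ⊆ S := by
    rintro _ ⟨s, ⟨x, rfl⟩, rfl⟩
    obtain ⟨z, hz⟩ := hsurj x
    simp only at hz
    refine ⟨(e * e) * z, ?_⟩
    simp only
    rw [hBol e e z, hz]
  have him : ((fun z : L => e * z) '' S).ncard = S.ncard :=
    Set.ncard_image_of_injective S hinj
  have hSeq : (fun z : L => e * z) '' S = S :=
    Set.eq_of_subset_of_ncard_le hsub (le_of_eq him.symm) (Set.toFinite S)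
  have heS : e ∈ S := ⟨1, h1l e⟩
  rw [← hSeq] at heS
  obtain ⟨s, hsS, hse⟩ := heS
  simp only at hse
  have hs1 : s = 1 := hinj (show e * s = e * 1 by rw [hse, h1r])
  rw [hs1] at hsS
  obtain ⟨x₀, hx₀⟩ := hsS
  simp only at hx₀
  refine ⟨v, hv, ?_⟩
  have := hBol x₀ e v
  rw [hx₀, hv, h1l, h1l] at this
  rw [this, hx₀]

end Aux

theorem finite_bol_invertibles_bol_loop {L : Type*} [Mul L] [One L] [Finite L]
    (hBol : ∀ x y z : L, ((x * y) * z) * y = x * ((y * z) * y))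
    (hone : ∀ x : L, 1 * x = x ∧ x * 1 = x)
    (J : Set L) (hJ : J = {a : L | ∃ b : L, a * b = 1 ∧ b * a = 1}) :
    (∀ a ∈ J, ∀ b ∈ J, a * b ∈ J) ∧
      (1 : L) ∈ J ∧
      (∀ a ∈ J, ∀ b ∈ J, ∃! x : L, x ∈ J ∧ a * x = b) ∧
      (∀ a ∈ J, ∀ b ∈ J, ∃! y : L, y ∈ J ∧ y * a = b) ∧
      (∀ x ∈ J, ∀ y ∈ J, ∀ z ∈ J, ((x * y) * z) * y = x * ((y * z) * y)) := by
  have h1l : ∀ x : L, 1 * x = x := fun x => (hone x).1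
  have h1r : ∀ x : L, x * 1 = x := fun x => (hone x).2
  have hmem : ∀ a : L, a ∈ J ↔ ∃ b : L, a * b = 1 ∧ b * a = 1 := by
    intro a; rw [hJ]; rfl
  -- injectivity of right translations by elements of J
  have hRinj : ∀ a ∈ J, Function.Injective (fun x : L => x * a) := by
    intro a ha
    obtain ⟨a', h1, h2⟩ := (hmem a).mp ha
    intro x y hxy
    simp only at hxy
    have := congrArg (fun u => u * a') hxy
    rwa [bol_rip hBol hone h1 h2, bol_rip hBol hone h1 h2] at this
  -- injectivity of left translations by elements of J
  have hLinj : ∀ a ∈ J, Function.Injective (fun z : L => a * z) := by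
    intro a ha
    obtain ⟨a', h1, h2⟩ := (hmem a).mp ha
    exact bol_linj hBol hone h1 h2
  -- closure
  have hclos : ∀ a ∈ J, ∀ b ∈ J, a * b ∈ J := by
    intro a ha b hb
    have hinj : Function.Injective (fun z : L => (a * b) * z) := by
      intro z₁ z₂ h
      simp only at h
      have h' : a * ((b * z₁) * b) = a * ((b * z₂) * b) := by
        rw [← hBol a b z₁, ← hBol a b z₂, h]
      have h'' := hLinj a ha h'
      have h''' := hRinj b hb h''
      exact hLinj b hb h'''
    obtain ⟨v, hv1, hv2⟩ := bol_linj_inv hBol hone hinj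
    exact (hmem (a * b)).mpr ⟨v, hv1, hv2⟩
  have hone_mem : (1 : L) ∈ J := (hmem 1).mpr ⟨1, h1l 1, h1l 1⟩
  refine ⟨hclos, hone_mem, ?_, ?_, fun x _ y _ z _ => hBol x y z⟩
  · -- left division
    intro a ha b hb
    have hFinj : Function.Injective (fun x : J => (⟨a * x.1, hclos a ha x.1 x.2⟩ : J)) := by
      intro x y hxy
      have := congrArg Subtype.val hxy
      simp only at this
      exact Subtype.ext (hLinj a ha this)
    have hFsurj := Finite.injective_iff_surjective.mp hFinj
    obtain ⟨⟨x, hxJ⟩, hx⟩ := hFsurj ⟨b, hb⟩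
    have hax : a * x = b := congrArg Subtype.val hx
    refine ⟨x, ⟨hxJ, hax⟩, ?_⟩
    rintro y ⟨hyJ, hay⟩
    exact hLinj a ha (show a * y = a * x by rw [hay, hax])
  · -- right division
    intro a ha b hb
    obtain ⟨a', h1, h2⟩ := (hmem a).mp ha
    have ha' : a' ∈ J := (hmem a').mpr ⟨a, h2, h1⟩
    refine ⟨b * a', ⟨hclos b hb a' ha', bol_rip hBol hone h2 h1 b⟩, ?_⟩
    rintro y ⟨hyJ, hya⟩
    have : (b * a') * a = b := bol_rip hBol hone h2 h1 b
    exact hRinj a ha (show y * a = (b * a') * a by rw [hya, this])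
end

section
/- Let L be a right Bol magma with neutral element 1 that is also flexible (x·(y·x) = (x·y)·x for all x, y). Then the set J(L) of two-sided invertible elements is closed under multiplication, and (J(L),·) is a Moufang loop. -/
section Aux

variable {L : Type*} [Mul L] [One L]

/-- `a * (a' * a') = a'` for a two-sided invertible element. -/
lemma bolAux1 (hBol : ∀ x y z : L, ((x * y) * z) * y = x * ((y * z) * y))
    (hone : ∀ x : L, 1 * x = x ∧ x * 1 = x)
    (a a' : L) (h1 : a * a' = 1) : a * (a' * a') = a' := by
  have h := hBol a a' 1
  rw [h1, (hone 1).2, (hone a').1, (hone a').2] at h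
  exact h.symm

/-- Right translation by an invertible element is injective. -/
lemma bolAux2 (hBol : ∀ x y z : L, ((x * y) * z) * y = x * ((y * z) * y))
    (hone : ∀ x : L, 1 * x = x ∧ x * 1 = x)
    (a a' : L) (h1 : a * a' = 1) (h2 : a' * a = 1)
    {u v : L} (huv : u * a = v * a) : u = v := by
  have ka : a * (a' * a') = a' := bolAux1 hBol hone a a' h1
  have hu := hBol u a (a' * a')
  have hv := hBol v a (a' * a')
  rw [ka, h2, (hone u).2] at hu
  rw [ka, h2, (hone v).2] at hv
  rw [← hu, ← hv, huv]

/-- Right inverse property: `(x * a) * a' = x`. -/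
lemma bolRIP (hBol : ∀ x y z : L, ((x * y) * z) * y = x * ((y * z) * y))
    (hone : ∀ x : L, 1 * x = x ∧ x * 1 = x)
    (a a' : L) (h1 : a * a' = 1) (h2 : a' * a = 1)
    (x : L) : (x * a) * a' = x := by
  have h := hBol x a a'
  rw [h1, (hone a).1] at h
  exact bolAux2 hBol hone a a' h1 h2 h

/-- Left inverse property: `a' * (a * x) = x`. -/
lemma bolLIP (hBol : ∀ x y z : L, ((x * y) * z) * y = x * ((y * z) * y))
    (hflex : ∀ x y : L, x * (y * x) = (x * y) * x)
    (hone : ∀ x : L, 1 * x = x ∧ x * 1 = x)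
    (a a' : L) (h1 : a * a' = 1) (h2 : a' * a = 1)
    (x : L) : a' * (a * x) = x := by
  have hx : (x * a') * a = x := bolRIP hBol hone a' a h2 h1 x
  have h := hBol a' a (x * a')
  rw [h2, (hone (x * a')).1, hx, ← hflex a (x * a'), hx] at h
  exact h.symm

end Aux

theorem flexible_bol_invertibles_moufang_loop {L : Type*} [Mul L] [One L]
    (hBol : ∀ x y z : L, ((x * y) * z) * y = x * ((y * z) * y))
    (hflex : ∀ x y : L, x * (y * x) = (x * y) * x)
    (hone : ∀ x : L, 1 * x = x ∧ x * 1 = x)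
    (J : Set L) (hJ : J = {a : L | ∃ b : L, a * b = 1 ∧ b * a = 1}) :
    (∀ a ∈ J, ∀ b ∈ J, a * b ∈ J) ∧
      (1 : L) ∈ J ∧
      (∀ a ∈ J, ∀ b ∈ J, ∃! x : L, x ∈ J ∧ a * x = b) ∧
      (∀ a ∈ J, ∀ b ∈ J, ∃! y : L, y ∈ J ∧ y * a = b) ∧
      (∀ x ∈ J, ∀ y ∈ J, ∀ z ∈ J, ((x * y) * z) * y = x * ((y * z) * y)) ∧
      (∀ x ∈ J, ∀ y ∈ J, x * (y * x) = (x * y) * x) := by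
  subst hJ
  -- closure
  have hclosed : ∀ a ∈ {a : L | ∃ b : L, a * b = 1 ∧ b * a = 1},
      ∀ b ∈ {a : L | ∃ b : L, a * b = 1 ∧ b * a = 1},
      a * b ∈ {a : L | ∃ b : L, a * b = 1 ∧ b * a = 1} := by
    rintro a ⟨a', ha1, ha2⟩ b ⟨b', hb1, hb2⟩
    refine ⟨b' * a', ?_, ?_⟩
    · -- (a*b)*(b'*a') = 1
      have h := hBol (a * b) b' (a' * b)
      rw [bolRIP hBol hone b b' hb1 hb2 a,
          bolLIP hBol hflex hone a' a ha2 ha1 b,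
          ← hflex b' (a' * b),
          bolRIP hBol hone b b' hb1 hb2 a'] at h
      rw [← h, hb1]
    · -- (b'*a')*(a*b) = 1
      have h := hBol (b' * a') a (b * a')
      rw [bolRIP hBol hone a' a ha2 ha1 b',
          bolLIP hBol hflex hone b b' hb1 hb2 a',
          ← hflex a (b * a'),
          bolRIP hBol hone a' a ha2 ha1 b] at h
      rw [← h]; exact ha2
  refine ⟨hclosed, ⟨1, (hone 1).1, (hone 1).1⟩, ?_, ?_, fun x _ y _ z _ => hBol x y z,
    fun x _ y _ => hflex x y⟩
  · -- left division
    rintro a ha b hb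
    obtain ⟨a', ha1, ha2⟩ := ha
    refine ⟨a' * b, ⟨hclosed a' ⟨a, ha2, ha1⟩ b hb,
      bolLIP hBol hflex hone a' a ha2 ha1 b⟩, ?_⟩
    rintro x ⟨-, hx⟩
    have := bolLIP hBol hflex hone a a' ha1 ha2 x
    rw [hx] at this
    exact this.symm
  · -- right division
    rintro a ha b hb
    obtain ⟨a', ha1, ha2⟩ := ha
    refine ⟨b * a', ⟨hclosed b hb a' ⟨a, ha2, ha1⟩,
      bolRIP hBol hone a' a ha2 ha1 b⟩, ?_⟩
    rintro y ⟨-, hy⟩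
    have := bolRIP hBol hone a a' ha1 ha2 y
    rw [hy] at this
    exact this.symm
end
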